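/- arXiv:2408.10221 — 10 statements merged into one kernel-verified Lean document; each statement's English description precedes it below -/
import Mathlib

section
/- Every ideal of the semiring M⁺(X,𝒜) is a strong ideal: if f + g belongs to an ideal I, then both f and g belong to I. -/
open Set

variable {X : Type*}

/-- The positive cone `M⁺(X,𝒜)`: nonnegative real-valued measurable functions. -/
def MPlus (X : Type*) [MeasurableSpace X] : Set (X → ℝ) :=
  {f | Measurable f ∧ ∀ x, 0 ≤ f x}

/-- Agreement set `E(f,g)`. -/
def agree (f g : X → ℝ) : Set X := {x | f x = g x}

/-- Ideals of the semiring `M⁺(X,𝒜)`. -/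
def IsSemiringIdeal [MeasurableSpace X] (I : Set (X → ℝ)) : Prop :=
  I ⊆ MPlus X ∧ (0 : X → ℝ) ∈ I ∧
  (∀ f ∈ I, ∀ g ∈ I, f + g ∈ I) ∧
  (∀ f ∈ MPlus X, ∀ g ∈ I, f * g ∈ I)

/-- Ideals of the ring `M(X,𝒜)` of real-valued measurable functions. -/
def IsRingIdeal [MeasurableSpace X] (J : Set (X → ℝ)) : Prop :=
  (∀ f ∈ J, Measurable f) ∧ (0 : X → ℝ) ∈ J ∧
  (∀ f ∈ J, ∀ g ∈ J, f + g ∈ J) ∧ (∀ f ∈ J, -f ∈ J) ∧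
  (∀ f : X → ℝ, Measurable f → ∀ g ∈ J, f * g ∈ J)

/-- Congruences on the semiring `M⁺(X,𝒜)` (as relations on functions,
supported on the positive cone). -/
def IsCongruence [MeasurableSpace X] (ρ : (X → ℝ) → (X → ℝ) → Prop) : Prop :=
  (∀ f g, ρ f g → f ∈ MPlus X ∧ g ∈ MPlus X) ∧
  (∀ f ∈ MPlus X, ρ f f) ∧
  (∀ f g, ρ f g → ρ g f) ∧
  (∀ f g h, ρ f g → ρ g h → ρ f h) ∧
  (∀ f g h k, ρ f g → ρ h k → ρ (f + h) (g + k)) ∧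
  (∀ f g h k, ρ f g → ρ h k → ρ (f * h) (g * k))

/-- Cancellative congruence. -/
def IsCancellativeCongruence [MeasurableSpace X]
    (ρ : (X → ℝ) → (X → ℝ) → Prop) : Prop :=
  IsCongruence ρ ∧
  ∀ f g h, f ∈ MPlus X → g ∈ MPlus X → h ∈ MPlus X → ρ (f + h) (g + h) → ρ f g

/-- The family `E(ρ)` of agreement sets of a congruence. -/
def Efam [MeasurableSpace X] (ρ : (X → ℝ) → (X → ℝ) → Prop) : Set (Set X) :=
  {A | ∃ f g, ρ f g ∧ A = agree f g}

/-- z-congruence on `M⁺(X,𝒜)`. -/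
def IsZCongruence [MeasurableSpace X] (ρ : (X → ℝ) → (X → ℝ) → Prop) : Prop :=
  IsCongruence ρ ∧
  ∀ f g, f ∈ MPlus X → g ∈ MPlus X → agree f g ∈ Efam ρ → ρ f g

/-- A `Z_𝒜`-filter on `X`: a nonempty collection of nonempty measurable sets,
closed under finite intersections and upward closed among measurable sets. -/
def IsZFilter [MeasurableSpace X] (F : Set (Set X)) : Prop :=
  F.Nonempty ∧ (∀ A ∈ F, MeasurableSet A ∧ A.Nonempty) ∧
  (∀ A ∈ F, ∀ B ∈ F, A ∩ B ∈ F) ∧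
  (∀ A ∈ F, ∀ B : Set X, MeasurableSet B → A ⊆ B → B ∈ F)

/-- Prime congruence (twisted product condition). -/
def IsPrimeCongruence [MeasurableSpace X] (ρ : (X → ℝ) → (X → ℝ) → Prop) : Prop :=
  IsCongruence ρ ∧
  ∀ a b c d : X → ℝ, a ∈ MPlus X → b ∈ MPlus X → c ∈ MPlus X → d ∈ MPlus X →
    ρ (a * c + b * d) (a * d + b * c) → ρ a b ∨ ρ c d

/-- A proper congruence: one which does not relate all pairs of the cone. -/
def IsProperCongruence [MeasurableSpace X] (ρ : (X → ℝ) → (X → ℝ) → Prop) : Prop :=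
  ∃ f g, f ∈ MPlus X ∧ g ∈ MPlus X ∧ ¬ ρ f g

/-- Maximal congruence: proper, and any congruence containing it is itself or full. -/
def IsMaximalCongruence [MeasurableSpace X] (ρ : (X → ℝ) → (X → ℝ) → Prop) : Prop :=
  IsCongruence ρ ∧ IsProperCongruence ρ ∧
  ∀ σ, IsCongruence σ → (∀ f g, ρ f g → σ f g) →
    (∀ f g, σ f g → ρ f g) ∨ (∀ f ∈ MPlus X, ∀ g ∈ MPlus X, σ f g)

theorem stmt1 {X : Type*} [MeasurableSpace X] (I : Set (X → ℝ))
    (hI : IsSemiringIdeal I) (f g : X → ℝ)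
    (hf : f ∈ MPlus X) (hg : g ∈ MPlus X) (hfg : f + g ∈ I) :
    f ∈ I ∧ g ∈ I := by
  obtain ⟨hsub, hzero, hadd, hmul⟩ := hI
  have key : ∀ a b : X → ℝ, a ∈ MPlus X → b ∈ MPlus X → a + b ∈ I → a ∈ I := by
    intro a b ha hb hab
    set h : X → ℝ := fun x => a x / (a x + b x) with hh
    have hhM : h ∈ MPlus X := by
      refine ⟨ha.1.div (ha.1.add hb.1), fun x => div_nonneg (ha.2 x) (by
        have := add_nonneg (ha.2 x) (hb.2 x); simpa using this)⟩
    have heq : h * (a + b) = a := by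
      funext x
      simp only [Pi.mul_apply, Pi.add_apply, hh]
      rcases eq_or_ne (a x + b x) 0 with h0 | h0
      · have ha0 : a x = 0 := le_antisymm (by nlinarith [ha.2 x, hb.2 x]) (ha.2 x)
        simp [h0, ha0]
      · exact div_mul_cancel₀ _ h0
    have := hmul h hhM (a + b) hab
    rwa [heq] at this
  refine ⟨key f g hf hg hfg, key g f hg hf ?_⟩
  rwa [add_comm] at hfg
end

section
/- The map β sending an ideal I of the semiring M⁺(X,𝒜) to {f - g : f, g ∈ I} is a surjective lattice homomorphism from the ideal lattice of M⁺(X,𝒜) onto the ideal lattice of the ring M(X,𝒜), where joins are sums and meets are intersections. -/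
open Set

variable {X : Type*}

/-- The differences map `β`. -/
def betaMap [MeasurableSpace X] (I : Set (X → ℝ)) : Set (X → ℝ) :=
  {h | ∃ f ∈ I, ∃ g ∈ I, h = f - g}

/-- Sum of two ideals (the join in the ideal lattice). -/
def idealSum [MeasurableSpace X] (I J : Set (X → ℝ)) : Set (X → ℝ) :=
  {h | ∃ f ∈ I, ∃ g ∈ J, h = f + g}


section Aux
variable [MeasurableSpace X]

lemma posPart_mem (f : X → ℝ) (hf : Measurable f) :
    (fun x => max (f x) 0) ∈ MPlus X :=
  ⟨hf.max measurable_const, fun x => le_max_right _ _⟩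

lemma posPart_sub (f : X → ℝ) :
    f = (fun x => max (f x) 0) - (fun x => max (-f x) 0) := by
  funext x
  simp only [Pi.sub_apply]
  rcases le_total (f x) 0 with h | h
  · rw [max_eq_right h, max_eq_left (by linarith)]; ring
  · rw [max_eq_left h, max_eq_right (by linarith)]; ring

/-- Semiring ideals are downward closed within the positive cone. -/
lemma semiringIdeal_downward {I : Set (X → ℝ)} (hI : IsSemiringIdeal I)
    {h f : X → ℝ} (hh : h ∈ MPlus X) (hf : f ∈ I) (hle : ∀ x, h x ≤ f x) :
    h ∈ I := by
  obtain ⟨hsub, h0, hadd, hmul⟩ := hI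
  obtain ⟨hfm, hfpos⟩ := hsub hf
  set φ : X → ℝ := fun x => if f x = 0 then 0 else h x / f x with hφ
  have hφm : Measurable φ :=
    Measurable.ite (hfm (MeasurableSet.singleton 0)) measurable_const (hh.1.div hfm)
  have hφp : φ ∈ MPlus X := by
    refine ⟨hφm, fun x => ?_⟩
    by_cases hx : f x = 0
    · simp [hφ, hx]
    · simp only [hφ, hx, if_false]
      exact div_nonneg (hh.2 x) (hfpos x)
  have hkey : φ * f = h := by
    funext x
    simp only [Pi.mul_apply, hφ]
    by_cases hx : f x = 0
    · simp only [hx, if_true, zero_mul]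
      have h1 := hle x; have h2 := hh.2 x
      rw [hx] at h1
      linarith
    · simp only [hx, if_false]
      rw [div_mul_cancel₀ _ hx]
  exact hkey ▸ hmul φ hφp f hf

/-- `betaMap I ∩ MPlus = I` for semiring ideals. -/
lemma betaMap_inter_MPlus {I : Set (X → ℝ)} (hI : IsSemiringIdeal I) :
    betaMap I ∩ MPlus X = I := by
  ext h
  constructor
  · rintro ⟨⟨f, hfI, g, hgI, rfl⟩, hM⟩
    refine semiringIdeal_downward hI hM hfI fun x => ?_
    have := (hI.1 hgI).2 x
    simp only [Pi.sub_apply]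
    linarith
  · intro hh
    exact ⟨⟨h, hh, 0, hI.2.1, by simp⟩, hI.1 hh⟩

/-- betaMap of a semiring ideal is a ring ideal. -/
lemma betaMap_ringIdeal {I : Set (X → ℝ)} (hI : IsSemiringIdeal I) :
    IsRingIdeal (betaMap I) := by
  obtain ⟨hsub, h0, hadd, hmul⟩ := hI
  refine ⟨?_, ⟨0, h0, 0, h0, by simp⟩, ?_, ?_, ?_⟩
  · rintro h ⟨f, hf, g, hg, rfl⟩
    exact ((hsub hf).1).sub ((hsub hg).1)
  · rintro h ⟨f, hf, g, hg, rfl⟩ h' ⟨f', hf', g', hg', rfl⟩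
    exact ⟨f + f', hadd f hf f' hf', g + g', hadd g hg g' hg', by ring⟩
  · rintro h ⟨f, hf, g, hg, rfl⟩
    exact ⟨g, hg, f, hf, by ring⟩
  · rintro φ hφ h ⟨f, hf, g, hg, rfl⟩
    set φp : X → ℝ := fun x => max (φ x) 0
    set φn : X → ℝ := fun x => max (-φ x) 0
    have hp := posPart_mem φ hφ
    have hn := posPart_mem (-φ) hφ.neg
    refine ⟨φp * f + φn * g, hadd _ (hmul _ hp _ hf) _ (hmul _ hn _ hg),
      φp * g + φn * f, hadd _ (hmul _ hp _ hg) _ (hmul _ hn _ hf), ?_⟩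
    have hd := posPart_sub φ
    funext x
    have : φ x = φp x - φn x := congrFun hd x
    simp only [Pi.mul_apply, Pi.sub_apply, Pi.add_apply]
    rw [this]; ring

end Aux

theorem stmt2 {X : Type*} [MeasurableSpace X] :
    (∀ I : Set (X → ℝ), IsSemiringIdeal I → IsRingIdeal (betaMap I)) ∧
    (∀ J : Set (X → ℝ), IsRingIdeal J →
       ∃ I : Set (X → ℝ), IsSemiringIdeal I ∧ betaMap I = J) ∧
    (∀ I J : Set (X → ℝ), IsSemiringIdeal I → IsSemiringIdeal J →
       betaMap (idealSum I J) = idealSum (betaMap I) (betaMap J) ∧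
       betaMap (I ∩ J) = betaMap I ∩ betaMap J) := by
  refine ⟨fun I hI => betaMap_ringIdeal hI, ?_, ?_⟩
  · -- surjectivity
    rintro J ⟨hJm, hJ0, hJadd, hJneg, hJmul⟩
    refine ⟨J ∩ MPlus X, ⟨fun f hf => hf.2, ⟨hJ0, measurable_const, fun x => le_refl 0⟩,
      ?_, ?_⟩, ?_⟩
    · rintro f ⟨hfJ, hfm, hfp⟩ g ⟨hgJ, hgm, hgp⟩
      exact ⟨hJadd f hfJ g hgJ, hfm.add hgm, fun x => by
        have := hfp x; have := hgp x; simp only [Pi.add_apply]; linarith⟩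
    · rintro f ⟨hfm, hfp⟩ g ⟨hgJ, hgm, hgp⟩
      exact ⟨hJmul f hfm g hgJ, hfm.mul hgm, fun x =>
        mul_nonneg (hfp x) (hgp x)⟩
    · ext h
      constructor
      · rintro ⟨f, ⟨hfJ, _⟩, g, ⟨hgJ, _⟩, rfl⟩
        exact hJadd f hfJ (-g) (hJneg g hgJ)
      · intro hh
        have hm := hJm h hh
        set e : X → ℝ := fun x => if 0 ≤ h x then 1 else 0 with he
        have hem : Measurable e :=
          Measurable.ite (measurableSet_le measurable_const hm)
            measurable_const measurable_const
        have hp : (fun x => max (h x) 0) = e * h := by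
          funext x
          simp only [Pi.mul_apply, he]
          rcases le_total 0 (h x) with hx | hx
          · rw [max_eq_left hx, if_pos hx, one_mul]
          · rw [max_eq_right hx]
            by_cases hx' : 0 ≤ h x
            · rw [if_pos hx']; have : h x = 0 := le_antisymm hx hx'; rw [this]; ring
            · rw [if_neg hx', zero_mul]
        have hpJ : (fun x => max (h x) 0) ∈ J := hp ▸ hJmul e hem h hh
        have hnJ : (fun x => max (-h x) 0) ∈ J := by
          have : (fun x => max (-h x) 0) = (fun x => max (h x) 0) + (-h) := by
            funext x
            simp only [Pi.add_apply, Pi.neg_apply]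
            rcases le_total 0 (h x) with hx | hx
            · rw [max_eq_right (by linarith), max_eq_left hx]; ring
            · rw [max_eq_left (by linarith), max_eq_right hx]; ring
          rw [this]
          exact hJadd _ hpJ _ (hJneg h hh)
        exact ⟨_, ⟨hpJ, (posPart_mem h hm)⟩, _, ⟨hnJ, (posPart_mem (-h) hm.neg)⟩,
          posPart_sub h⟩
  · intro I J hI hJ
    constructor
    · ext h
      constructor
      · rintro ⟨f, ⟨f1, hf1, g1, hg1, rfl⟩, g, ⟨f2, hf2, g2, hg2, rfl⟩, rfl⟩
        exact ⟨f1 - f2, ⟨f1, hf1, f2, hf2, rfl⟩, g1 - g2, ⟨g1, hg1, g2, hg2, rfl⟩, by ring⟩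
      · rintro ⟨f, ⟨f1, hf1, f2, hf2, rfl⟩, g, ⟨g1, hg1, g2, hg2, rfl⟩, rfl⟩
        exact ⟨f1 + g1, ⟨f1, hf1, g1, hg1, rfl⟩, f2 + g2, ⟨f2, hf2, g2, hg2, rfl⟩, by ring⟩
    · ext h
      constructor
      · rintro ⟨f, ⟨hfI, hfJ⟩, g, ⟨hgI, hgJ⟩, rfl⟩
        exact ⟨⟨f, hfI, g, hgI, rfl⟩, ⟨f, hfJ, g, hgJ, rfl⟩⟩
      · rintro ⟨hhI, hhJ⟩
        have hm : Measurable h := (betaMap_ringIdeal hI).1 h hhI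
        have hpI : (fun x => max (h x) 0) ∈ I := by
          have : (fun x => max (h x) 0) ∈ betaMap I ∩ MPlus X := by
            constructor
            · obtain ⟨f, hf, g, hg, rfl⟩ := hhI
              set e : X → ℝ := fun x => if 0 ≤ f x - g x then 1 else 0 with he
              have hem : e ∈ MPlus X := by
                refine ⟨Measurable.ite (measurableSet_le measurable_const
                  (((hI.1 hf).1).sub ((hI.1 hg).1))) measurable_const measurable_const,
                  fun x => ?_⟩
                simp only [he]; split <;> norm_num
              refine ⟨e * f, hI.2.2.2 e hem f hf, e * g, hI.2.2.2 e hem g hg, ?_⟩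
              funext x
              simp only [Pi.sub_apply, Pi.mul_apply, he]
              rcases le_total 0 (f x - g x) with hx | hx
              · rw [max_eq_left hx, if_pos hx]; ring
              · rw [max_eq_right hx]
                by_cases hx' : 0 ≤ f x - g x
                · rw [if_pos hx']
                  have : f x - g x = 0 := le_antisymm hx hx'
                  simp only [one_mul]; linarith
                · rw [if_neg hx']; ring
            · exact posPart_mem h hm
          rw [betaMap_inter_MPlus hI] at this
          exact this
        have hpJ : (fun x => max (h x) 0) ∈ J := by
          have : (fun x => max (h x) 0) ∈ betaMap J ∩ MPlus X := by
            constructor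
            · obtain ⟨f, hf, g, hg, rfl⟩ := hhJ
              set e : X → ℝ := fun x => if 0 ≤ f x - g x then 1 else 0 with he
              have hem : e ∈ MPlus X := by
                refine ⟨Measurable.ite (measurableSet_le measurable_const
                  (((hJ.1 hf).1).sub ((hJ.1 hg).1))) measurable_const measurable_const,
                  fun x => ?_⟩
                simp only [he]; split <;> norm_num
              refine ⟨e * f, hJ.2.2.2 e hem f hf, e * g, hJ.2.2.2 e hem g hg, ?_⟩
              funext x
              simp only [Pi.sub_apply, Pi.mul_apply, he]
              rcases le_total 0 (f x - g x) with hx | hx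
              · rw [max_eq_left hx, if_pos hx]; ring
              · rw [max_eq_right hx]
                by_cases hx' : 0 ≤ f x - g x
                · rw [if_pos hx']
                  have : f x - g x = 0 := le_antisymm hx hx'
                  simp only [one_mul]; linarith
                · rw [if_neg hx']; ring
            · exact posPart_mem h hm
          rw [betaMap_inter_MPlus hJ] at this
          exact this
        have hnI : (fun x => max (-h x) 0) ∈ I := by
          have hneg : -h ∈ betaMap I := by
            obtain ⟨f, hf, g, hg, rfl⟩ := hhI
            exact ⟨g, hg, f, hf, by ring⟩
          have : (fun x => max (-h x) 0) ∈ betaMap I ∩ MPlus X := by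
            refine ⟨?_, posPart_mem (-h) hm.neg⟩
            obtain ⟨f, hf, g, hg, hfg⟩ := hneg
            set e : X → ℝ := fun x => if 0 ≤ f x - g x then 1 else 0 with he
            have hem : e ∈ MPlus X := by
              refine ⟨Measurable.ite (measurableSet_le measurable_const
                (((hI.1 hf).1).sub ((hI.1 hg).1))) measurable_const measurable_const,
                fun x => ?_⟩
              simp only [he]; split <;> norm_num
            refine ⟨e * f, hI.2.2.2 e hem f hf, e * g, hI.2.2.2 e hem g hg, ?_⟩
            funext x
            have hx0 : -h x = f x - g x := by
              have := congrFun hfg x; simpa using this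
            simp only [Pi.sub_apply, Pi.mul_apply, he, hx0]
            rcases le_total 0 (f x - g x) with hx | hx
            · rw [max_eq_left hx, if_pos hx]; ring
            · rw [max_eq_right hx]
              by_cases hx' : 0 ≤ f x - g x
              · rw [if_pos hx']
                have : f x - g x = 0 := le_antisymm hx hx'
                simp only [one_mul]; linarith
              · rw [if_neg hx']; ring
          rw [betaMap_inter_MPlus hI] at this
          exact this
        have hnJ : (fun x => max (-h x) 0) ∈ J := by
          have hneg : -h ∈ betaMap J := by
            obtain ⟨f, hf, g, hg, rfl⟩ := hhJ
            exact ⟨g, hg, f, hf, by ring⟩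
          have : (fun x => max (-h x) 0) ∈ betaMap J ∩ MPlus X := by
            refine ⟨?_, posPart_mem (-h) hm.neg⟩
            obtain ⟨f, hf, g, hg, hfg⟩ := hneg
            set e : X → ℝ := fun x => if 0 ≤ f x - g x then 1 else 0 with he
            have hem : e ∈ MPlus X := by
              refine ⟨Measurable.ite (measurableSet_le measurable_const
                (((hJ.1 hf).1).sub ((hJ.1 hg).1))) measurable_const measurable_const,
                fun x => ?_⟩
              simp only [he]; split <;> norm_num
            refine ⟨e * f, hJ.2.2.2 e hem f hf, e * g, hJ.2.2.2 e hem g hg, ?_⟩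
            funext x
            have hx0 : -h x = f x - g x := by
              have := congrFun hfg x; simpa using this
            simp only [Pi.sub_apply, Pi.mul_apply, he, hx0]
            rcases le_total 0 (f x - g x) with hx | hx
            · rw [max_eq_left hx, if_pos hx]; ring
            · rw [max_eq_right hx]
              by_cases hx' : 0 ≤ f x - g x
              · rw [if_pos hx']
                have : f x - g x = 0 := le_antisymm hx hx'
                simp only [one_mul]; linarith
              · rw [if_neg hx']; ring
          rw [betaMap_inter_MPlus hJ] at this
          exact this
        exact ⟨_, ⟨hpI, hpJ⟩, _, ⟨hnI, hnJ⟩, posPart_sub h⟩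
end

section
/- The lattice of ideals of the semiring M⁺(X,𝒜) is isomorphic to the lattice of ideals of the ring M(X,𝒜); the isomorphism is given by I ↦ I ∩ M⁺(X,𝒜) with inverse J ↦ {f - g : f, g ∈ J}. -/
open Set

variable {X : Type*}

section Aux
variable [MeasurableSpace X]

lemma posPart_mem_s3 {J : Set (X → ℝ)} (hJ : IsRingIdeal J) {h : X → ℝ} (hh : h ∈ J) :
    (fun x => if 0 ≤ h x then h x else 0) ∈ J ∩ MPlus X := by
  obtain ⟨hmeas, h0, hadd, hneg, hmul⟩ := hJ
  have hm := hmeas h hh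
  have hset : MeasurableSet {x | 0 ≤ h x} := measurableSet_le measurable_const hm
  have heq : (fun x => if 0 ≤ h x then h x else 0)
      = (fun x => if 0 ≤ h x then (1:ℝ) else 0) * h := by
    funext x; by_cases hx : 0 ≤ h x <;> simp [hx]
  constructor
  · rw [heq]
    exact hmul _ (Measurable.ite hset measurable_const measurable_const) h hh
  · refine ⟨Measurable.ite hset hm measurable_const, fun x => ?_⟩
    dsimp only; split_ifs with hx
    · exact hx
    · exact le_refl 0

lemma negPart_mem {J : Set (X → ℝ)} (hJ : IsRingIdeal J) {h : X → ℝ} (hh : h ∈ J) :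
    (fun x => if 0 ≤ h x then 0 else -h x) ∈ J ∩ MPlus X := by
  obtain ⟨hmeas, h0, hadd, hneg, hmul⟩ := hJ
  have hm := hmeas h hh
  have hset : MeasurableSet {x | 0 ≤ h x} := measurableSet_le measurable_const hm
  have heq : (fun x => if 0 ≤ h x then 0 else -h x)
      = (fun x => if 0 ≤ h x then (0:ℝ) else -1) * h := by
    funext x; by_cases hx : 0 ≤ h x <;> simp [hx]
  constructor
  · rw [heq]
    exact hmul _ (Measurable.ite hset measurable_const measurable_const) h hh
  · refine ⟨Measurable.ite hset measurable_const hm.neg, fun x => ?_⟩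
    dsimp only; split_ifs with hx
    · exact le_refl 0
    · linarith [lt_of_not_ge hx]

lemma parts_sub (h : X → ℝ) :
    h = (fun x => if 0 ≤ h x then h x else 0) - (fun x => if 0 ≤ h x then 0 else -h x) := by
  funext x
  simp only [Pi.sub_apply]
  by_cases hx : 0 ≤ h x <;> simp [hx]

end Aux

theorem stmt3 {X : Type*} [MeasurableSpace X] :
    (∀ J : Set (X → ℝ), IsRingIdeal J →
       IsSemiringIdeal (J ∩ MPlus X) ∧ betaMap (J ∩ MPlus X) = J) ∧
    (∀ I : Set (X → ℝ), IsSemiringIdeal I →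
       IsRingIdeal (betaMap I) ∧ betaMap I ∩ MPlus X = I) ∧
    (∀ J₁ J₂ : Set (X → ℝ), IsRingIdeal J₁ → IsRingIdeal J₂ →
       (J₁ ⊆ J₂ ↔ J₁ ∩ MPlus X ⊆ J₂ ∩ MPlus X)) := by
  refine ⟨?_, ?_, ?_⟩
  · intro J hJ
    obtain ⟨hmeas, h0, hadd, hneg, hmul⟩ := hJ
    constructor
    · refine ⟨inter_subset_right, ⟨h0, measurable_const, fun x => le_refl 0⟩, ?_, ?_⟩
      · rintro f ⟨hfJ, hfm, hfp⟩ g ⟨hgJ, hgm, hgp⟩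
        exact ⟨hadd f hfJ g hgJ, hfm.add hgm, fun x => add_nonneg (hfp x) (hgp x)⟩
      · rintro f ⟨hfm, hfp⟩ g ⟨hgJ, hgm, hgp⟩
        exact ⟨hmul f hfm g hgJ, hfm.mul hgm, fun x => mul_nonneg (hfp x) (hgp x)⟩
    · ext h
      constructor
      · rintro ⟨f, ⟨hfJ, _⟩, g, ⟨hgJ, _⟩, rfl⟩
        rw [sub_eq_add_neg]
        exact hadd f hfJ (-g) (hneg g hgJ)
      · intro hh
        exact ⟨_, posPart_mem_s3 ⟨hmeas, h0, hadd, hneg, hmul⟩ hh,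
          _, negPart_mem ⟨hmeas, h0, hadd, hneg, hmul⟩ hh, parts_sub h⟩
  · intro I hI
    obtain ⟨hsub, h0I, haddI, hmulI⟩ := hI
    constructor
    · refine ⟨?_, ⟨0, h0I, 0, h0I, (sub_self 0).symm⟩, ?_, ?_, ?_⟩
      · rintro h ⟨f, hf, g, hg, rfl⟩
        exact ((hsub hf).1).sub ((hsub hg).1)
      · rintro h1 ⟨f1, hf1, g1, hg1, rfl⟩ h2 ⟨f2, hf2, g2, hg2, rfl⟩
        exact ⟨f1 + f2, haddI f1 hf1 f2 hf2, g1 + g2, haddI g1 hg1 g2 hg2, by ring⟩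
      · rintro h ⟨f, hf, g, hg, rfl⟩
        exact ⟨g, hg, f, hf, neg_sub f g⟩
      · rintro k hk h ⟨f, hf, g, hg, rfl⟩
        have hset : MeasurableSet {x | 0 ≤ k x} := measurableSet_le measurable_const hk
        set kp : X → ℝ := fun x => if 0 ≤ k x then k x else 0 with hkp
        set kn : X → ℝ := fun x => if 0 ≤ k x then 0 else -k x with hkn
        have hkpM : kp ∈ MPlus X := by
          refine ⟨Measurable.ite hset hk measurable_const, fun x => ?_⟩
          simp only [hkp]; split_ifs with hx
          · exact hx
          · exact le_refl 0
        have hknM : kn ∈ MPlus X := by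
          refine ⟨Measurable.ite hset measurable_const hk.neg, fun x => ?_⟩
          simp only [hkn]; split_ifs with hx
          · exact le_refl 0
          · linarith [lt_of_not_ge hx]
        refine ⟨kp * f + kn * g,
          haddI _ (hmulI kp hkpM f hf) _ (hmulI kn hknM g hg),
          kp * g + kn * f,
          haddI _ (hmulI kp hkpM g hg) _ (hmulI kn hknM f hf), ?_⟩
        funext x
        simp only [Pi.mul_apply, Pi.sub_apply, Pi.add_apply, hkp, hkn]
        split_ifs <;> ring
    · ext h
      constructor
      · rintro ⟨⟨f, hf, g, hg, rfl⟩, _, hpos⟩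
        obtain ⟨hfm, hfp⟩ := hsub hf
        obtain ⟨hgm, hgp⟩ := hsub hg
        have hpos' : ∀ x, 0 ≤ f x - g x := fun x => hpos x
        set φ : X → ℝ := fun x => if f x = 0 then 0 else (f x - g x) / f x with hφ
        have hφM : φ ∈ MPlus X := by
          refine ⟨Measurable.ite (measurableSet_eq_fun hfm measurable_const)
            measurable_const ((hfm.sub hgm).div hfm), fun x => ?_⟩
          simp only [hφ]; split_ifs with hx
          · exact le_refl 0
          · exact div_nonneg (hpos' x) (hfp x)
        have heq : φ * f = f - g := by
          funext x
          simp only [Pi.mul_apply, Pi.sub_apply, hφ]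
          by_cases hx : f x = 0
          · have hg0 : g x = 0 := le_antisymm (by linarith [hpos' x]) (hgp x)
            simp [hx, hg0]
          · rw [if_neg hx, div_mul_cancel₀ _ hx]
        rw [← heq]
        exact hmulI φ hφM f hf
      · intro hh
        exact ⟨⟨h, hh, 0, h0I, (sub_zero h).symm⟩, hsub hh⟩
  · intro J₁ J₂ hJ₁ hJ₂
    constructor
    · intro hss
      exact inter_subset_inter_left _ hss
    · intro hss h hh
      have hp := hss (posPart_mem_s3 hJ₁ hh)
      have hn := hss (negPart_mem hJ₁ hh)
      obtain ⟨_, _, hadd2, hneg2, _⟩ := hJ₂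
      rw [parts_sub h, sub_eq_add_neg]
      exact hadd2 _ hp.1 _ (hneg2 _ hn.1)
end

section
/- Every ideal of the semiring M⁺(X,𝒜) is of the form I ∩ M⁺(X,𝒜) for some ideal I of the ring M(X,𝒜). -/
open Set

variable {X : Type*}

theorem stmt4 {X : Type*} [MeasurableSpace X] (I : Set (X → ℝ))
    (hI : IsSemiringIdeal I) :
    ∃ J : Set (X → ℝ), IsRingIdeal J ∧ I = J ∩ MPlus X := by
  obtain ⟨hsub, h0, hadd, hmul⟩ := hI
  refine ⟨{h | ∃ f ∈ I, ∃ g ∈ I, h = f - g}, ⟨?_, ⟨0, h0, 0, h0, by simp⟩, ?_, ?_, ?_⟩, ?_⟩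
  · rintro h ⟨f, hf, g, hg, rfl⟩
    exact ((hsub hf).1).sub ((hsub hg).1)
  · rintro h ⟨f, hf, g, hg, rfl⟩ h' ⟨f', hf', g', hg', rfl⟩
    exact ⟨f + f', hadd f hf f' hf', g + g', hadd g hg g' hg', by ring⟩
  · rintro h ⟨f, hf, g, hg, rfl⟩
    exact ⟨g, hg, f, hf, by ring⟩
  · rintro k hk h ⟨f, hf, g, hg, rfl⟩
    have hkp : (fun x => max (k x) 0) ∈ MPlus X :=
      ⟨hk.max measurable_const, fun x => le_max_right _ _⟩
    have hkn : (fun x => max (-k x) 0) ∈ MPlus X :=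
      ⟨hk.neg.max measurable_const, fun x => le_max_right _ _⟩
    refine ⟨(fun x => max (k x) 0) * f + (fun x => max (-k x) 0) * g,
      hadd _ (hmul _ hkp f hf) _ (hmul _ hkn g hg),
      (fun x => max (k x) 0) * g + (fun x => max (-k x) 0) * f,
      hadd _ (hmul _ hkp g hg) _ (hmul _ hkn f hf), ?_⟩
    funext x
    simp only [Pi.mul_apply, Pi.sub_apply, Pi.add_apply]
    rcases le_total (k x) 0 with hx | hx
    · rw [max_eq_right hx, max_eq_left (by linarith)]; ring
    · rw [max_eq_left hx, max_eq_right (by linarith)]; ring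
  · ext h
    constructor
    · intro hh
      exact ⟨⟨h, hh, 0, h0, by simp⟩, hsub hh⟩
    · rintro ⟨⟨f, hf, g, hg, rfl⟩, hm, hp⟩
      set h := f - g with hh
      have hgp := hsub hg
      have hle : ∀ x, h x ≤ f x := fun x => by
        have := hgp.2 x
        simp only [hh, Pi.sub_apply]; linarith
      set q : X → ℝ := fun x => if f x = 0 then 0 else h x / f x with hq
      have hfm := (hsub hf).1
      have hqm : Measurable q :=
        Measurable.ite (hfm (measurableSet_singleton 0)) measurable_const (hm.div hfm)
      have hfp := hsub hf
      have hqn : ∀ x, 0 ≤ q x := fun x => by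
        simp only [hq]
        split
        · exact le_refl 0
        · exact div_nonneg (hp x) (hfp.2 x)
      have : h = q * f := by
        funext x
        simp only [Pi.mul_apply, hq]
        by_cases hx : f x = 0
        · simp [hx]
          have h1 := hp x
          have h2 := hle x
          rw [hx] at h2
          linarith
        · simp [hx, div_mul_cancel₀ _ hx]
      rw [this]
      exact hmul q ⟨hqm, hqn⟩ f hf
end

section
/- For f ∈ M⁺(X,𝒜), the intersection of all maximal ideals of M⁺(X,𝒜) containing f equals {g ∈ M⁺(X,𝒜) : Z(f) ⊆ Z(g)}. -/
open Set

variable {X : Type*}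

/-- Maximal (proper) ideal of the semiring `M⁺(X,𝒜)`. -/
def IsMaximalSemiringIdeal [MeasurableSpace X] (M : Set (X → ℝ)) : Prop :=
  IsSemiringIdeal M ∧ M ≠ MPlus X ∧
  ∀ I : Set (X → ℝ), IsSemiringIdeal I → M ⊆ I → I = M ∨ I = MPlus X


lemma zmem_aux [MeasurableSpace X] {I : Set (X → ℝ)} (hI : IsSemiringIdeal I)
    {h k : X → ℝ} (hh : h ∈ I) (hk : k ∈ MPlus X)
    (hz : ∀ x, h x = 0 → k x = 0) : k ∈ I := by
  obtain ⟨hIsub, -, -, hmul⟩ := hI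
  have hhM : h ∈ MPlus X := hIsub hh
  have hmem : (fun y => k y / h y) ∈ MPlus X :=
    ⟨hk.1.div hhM.1, fun y => div_nonneg (hk.2 y) (hhM.2 y)⟩
  have hkeq : k = (fun y => k y / h y) * h := by
    funext y
    by_cases h0 : h y = 0
    · simp [Pi.mul_apply, h0, hz y h0]
    · simp [Pi.mul_apply, div_mul_cancel₀ _ h0]
  rw [hkeq]
  exact hmul _ hmem _ hh

lemma Mx_maximal [MeasurableSpace X] (x : X) :
    IsMaximalSemiringIdeal {h : X → ℝ | h ∈ MPlus X ∧ h x = 0} := by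
  have zeroM : (0 : X → ℝ) ∈ MPlus X := ⟨measurable_const, fun _ => le_refl 0⟩
  refine ⟨⟨fun h hh => hh.1, ⟨zeroM, rfl⟩, ?_, ?_⟩, ?_, ?_⟩
  · rintro a ⟨⟨ma, pa⟩, hax⟩ b ⟨⟨mb, pb⟩, hbx⟩
    exact ⟨⟨ma.add mb, fun y => add_nonneg (pa y) (pb y)⟩,
      by simp [Pi.add_apply, hax, hbx]⟩
  · rintro a ⟨ma, pa⟩ b ⟨⟨mb, pb⟩, hbx⟩
    exact ⟨⟨ma.mul mb, fun y => mul_nonneg (pa y) (pb y)⟩,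
      by simp [Pi.mul_apply, hbx]⟩
  · intro heq
    have h1 : (1 : X → ℝ) ∈ MPlus X := ⟨measurable_const, fun _ => zero_le_one⟩
    have : (1 : X → ℝ) ∈ {h : X → ℝ | h ∈ MPlus X ∧ h x = 0} := by rw [heq]; exact h1
    exact one_ne_zero this.2
  · intro I hI hsub
    by_cases hall : ∀ h ∈ I, h x = 0
    · left
      ext h
      exact ⟨fun hh => ⟨hI.1 hh, hall h hh⟩, fun hh => hsub hh⟩
    · right
      push_neg at hall
      obtain ⟨h, hhI, hhx⟩ := hall
      have hhM : h ∈ MPlus X := hI.1 hhI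
      refine Subset.antisymm hI.1 ?_
      intro k hk
      set s : X → ℝ := fun y => (k x / h x) * h y with hs
      have hc : 0 ≤ k x / h x := div_nonneg (hk.2 x) (hhM.2 x)
      have k1M : (fun y => max (k y - s y) 0) ∈ MPlus X :=
        ⟨(hk.1.sub (measurable_const.mul hhM.1)).max measurable_const,
          fun y => le_max_right _ _⟩
      have k1I : (fun y => max (k y - s y) 0) ∈ I := by
        apply hsub
        refine ⟨k1M, ?_⟩
        have hsx : s x = k x := div_mul_cancel₀ _ hhx
        simp [hsx]
      have k2M : (fun y => min (k y) (s y)) ∈ MPlus X :=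
        ⟨hk.1.min (measurable_const.mul hhM.1),
          fun y => le_min (hk.2 y) (mul_nonneg hc (hhM.2 y))⟩
      have k2I : (fun y => min (k y) (s y)) ∈ I := by
        refine zmem_aux hI hhI k2M ?_
        intro y hy
        simp only [hs, hy, mul_zero]
        exact min_eq_right (hk.2 y)
      have hkeq : k = (fun y => max (k y - s y) 0) + (fun y => min (k y) (s y)) := by
        funext y
        simp only [Pi.add_apply]
        rcases le_total (k y) (s y) with hle | hle
        · rw [max_eq_right (by linarith), min_eq_left hle]; ring
        · rw [max_eq_left (by linarith), min_eq_right hle]; ring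
      rw [hkeq]
      exact hI.2.2.1 _ k1I _ k2I

theorem stmt5 {X : Type*} [MeasurableSpace X] (f : X → ℝ) (hf : f ∈ MPlus X) :
    ∀ g : X → ℝ,
      (g ∈ MPlus X ∧ ∀ M : Set (X → ℝ), IsMaximalSemiringIdeal M → f ∈ M → g ∈ M) ↔
      (g ∈ MPlus X ∧ {x | f x = 0} ⊆ {x | g x = 0}) := by
  intro g
  constructor
  · rintro ⟨hg, hM⟩
    refine ⟨hg, fun x hx => ?_⟩
    exact (hM _ (Mx_maximal x) ⟨hf, hx⟩).2
  · rintro ⟨hg, hz⟩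
    exact ⟨hg, fun M hM hfM => zmem_aux hM.1 hfM hg (fun x hx => hz hx)⟩
end

section
/- If 𝔉 is a Z_𝒜-filter on X, then E⁻¹(𝔉) = {(f,g) ∈ M⁺(X,𝒜)² : E(f,g) ∈ 𝔉} is a cancellative congruence on the semiring M⁺(X,𝒜). -/
open Set

variable {X : Type*}

lemma agree_meas {X : Type*} [MeasurableSpace X] {f g : X → ℝ}
    (hf : Measurable f) (hg : Measurable g) : MeasurableSet (agree f g) :=
  measurableSet_eq_fun hf hg

theorem stmt8 {X : Type*} [MeasurableSpace X] (F : Set (Set X))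
    (hF : IsZFilter F) :
    IsCancellativeCongruence
      (fun f g : X → ℝ => f ∈ MPlus X ∧ g ∈ MPlus X ∧ agree f g ∈ F) := by
  obtain ⟨⟨A, hA⟩, hmem, hinter, hup⟩ := hF
  have hup' : ∀ {f g : X → ℝ}, Measurable f → Measurable g →
      ∀ B ∈ F, B ⊆ agree f g → agree f g ∈ F := fun hf hg B hB hsub =>
    hup B hB _ (agree_meas hf hg) hsub
  refine ⟨⟨fun f g h => ⟨h.1, h.2.1⟩, ?_, ?_, ?_, ?_, ?_⟩, ?_⟩
  · intro f hf
    refine ⟨hf, hf, hup' hf.1 hf.1 A hA fun x _ => rfl⟩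
  · rintro f g ⟨hf, hg, h⟩
    refine ⟨hg, hf, hup' hg.1 hf.1 _ h fun x hx => (hx : f x = g x).symm⟩
  · rintro f g h ⟨hf, hg, hfg⟩ ⟨_, hh, hgh⟩
    exact ⟨hf, hh, hup' hf.1 hh.1 _ (hinter _ hfg _ hgh)
      fun x hx => hx.1.trans hx.2⟩
  · rintro f g h k ⟨hf, hg, hfg⟩ ⟨hh, hk, hhk⟩
    refine ⟨⟨hf.1.add hh.1, fun x => add_nonneg (hf.2 x) (hh.2 x)⟩,
      ⟨hg.1.add hk.1, fun x => add_nonneg (hg.2 x) (hk.2 x)⟩,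
      hup' (hf.1.add hh.1) (hg.1.add hk.1) _ (hinter _ hfg _ hhk) ?_⟩
    rintro x ⟨h1, h2⟩
    show f x + h x = g x + k x
    rw [(h1 : f x = g x), (h2 : h x = k x)]
  · rintro f g h k ⟨hf, hg, hfg⟩ ⟨hh, hk, hhk⟩
    refine ⟨⟨hf.1.mul hh.1, fun x => mul_nonneg (hf.2 x) (hh.2 x)⟩,
      ⟨hg.1.mul hk.1, fun x => mul_nonneg (hg.2 x) (hk.2 x)⟩,
      hup' (hf.1.mul hh.1) (hg.1.mul hk.1) _ (hinter _ hfg _ hhk) ?_⟩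
    rintro x ⟨h1, h2⟩
    show f x * h x = g x * k x
    rw [(h1 : f x = g x), (h2 : h x = k x)]
  · rintro f g h hf hg hh ⟨_, _, hmem'⟩
    refine ⟨hf, hg, hup' hf.1 hg.1 _ hmem' fun x hx => ?_⟩
    have : f x + h x = g x + h x := hx
    exact add_right_cancel this
end

section
/- Every congruence on the ring M(X,𝒜) of real-valued measurable functions is a z-congruence: if E(f,g) = E(h,k) for pairs in a congruence k with E(f,g) ∈ {E(a,b) : (a,b) ∈ k}, then (f,g) ∈ k. Equivalently, every ideal of M(X,𝒜) is a z-ideal: if Z(f) = Z(g) and g ∈ I then f ∈ I. -/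
open Set

variable {X : Type*}

/-- Congruences on the ring `M(X,𝒜)`. -/
def IsRingCongruence [MeasurableSpace X] (k : (X → ℝ) → (X → ℝ) → Prop) : Prop :=
  (∀ f g, k f g → Measurable f ∧ Measurable g) ∧
  (∀ f : X → ℝ, Measurable f → k f f) ∧
  (∀ f g, k f g → k g f) ∧
  (∀ f g h, k f g → k g h → k f h) ∧
  (∀ f g h l, k f g → k h l → k (f + h) (g + l)) ∧
  (∀ f g h l, k f g → k h l → k (f * h) (g * l))

theorem stmt10 {X : Type*} [MeasurableSpace X] :
    (∀ k : (X → ℝ) → (X → ℝ) → Prop, IsRingCongruence k →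
       ∀ f g : X → ℝ, Measurable f → Measurable g →
         agree f g ∈ {A | ∃ a b, k a b ∧ A = agree a b} → k f g) ∧
    (∀ J : Set (X → ℝ), IsRingIdeal J →
       ∀ f g : X → ℝ, Measurable f → g ∈ J →
         {x | g x = 0} ⊆ {x | f x = 0} → f ∈ J) := by
  constructor
  · rintro k hk f g hf hg ⟨a, b, hab, hE⟩
    obtain ⟨hmem, hrefl, hsymm, htrans, hadd, hmul⟩ := hk
    obtain ⟨ha, hb⟩ := hmem a b hab
    have h1 : k (a + (-b)) (b + (-b)) := hadd a b (-b) (-b) hab (hrefl _ hb.neg)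
    have h2 : k (a - b) 0 := by
      have e1 : a + (-b) = a - b := by ring
      have e2 : b + (-b) = (0 : X → ℝ) := by ring
      rwa [e1, e2] at h1
    set m : X → ℝ := fun x => (f x - g x) * ((a - b) x)⁻¹ with hm
    have hmmeas : Measurable m := (hf.sub hg).mul (ha.sub hb).inv
    have h3 : k (m * (a - b)) (m * 0) := hmul m m (a - b) 0 (hrefl m hmmeas) h2
    have e3 : m * (a - b) = f - g := by
      funext x
      by_cases hx : a x - b x = 0
      · have hxa : a x = b x := by linarith
        have hxf : f x = g x := by
          have : x ∈ agree f g := by rw [hE]; exact hxa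
          exact this
        simp [hm, Pi.mul_apply, Pi.sub_apply, hx, hxf]
      · have : ((a - b) x)⁻¹ * (a - b) x = 1 := by
          rw [inv_mul_cancel₀]; simpa [Pi.sub_apply] using hx
        simp only [hm, Pi.mul_apply, Pi.sub_apply]
        field_simp
    have e4 : m * 0 = (0 : X → ℝ) := by ring
    rw [e3, e4] at h3
    have h5 : k ((f - g) + g) (0 + g) := hadd _ _ g g h3 (hrefl g hg)
    have e5 : (f - g) + g = f := by ring
    have e6 : (0 : X → ℝ) + g = g := by ring
    rwa [e5, e6] at h5
  · rintro J ⟨hmeas, hz, hadd, hneg, hmul⟩ f g hf hg hsub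
    have hgm : Measurable g := hmeas g hg
    have e : f = (fun x => f x * (g x)⁻¹) * g := by
      funext x
      by_cases hx : g x = 0
      · have : f x = 0 := hsub hx
        simp [this, hx]
      · simp only [Pi.mul_apply]
        field_simp
    rw [e]
    exact hmul _ (hf.mul hgm.inv) g hg
end

section
/- If ρ is a prime z-congruence on M⁺(X,𝒜), then E(ρ) is a prime Z_𝒜-filter on X: whenever A, B ∈ 𝒜 and A ∪ B ∈ E(ρ), then A ∈ E(ρ) or B ∈ E(ρ). -/
open Set

variable {X : Type*}

theorem stmt12 {X : Type*} [MeasurableSpace X] (ρ : (X → ℝ) → (X → ℝ) → Prop)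
    (hz : IsZCongruence ρ) (hp : IsPrimeCongruence ρ)
    (A B : Set X) (hA : MeasurableSet A) (hB : MeasurableSet B)
    (hAB : A ∪ B ∈ Efam ρ) :
    A ∈ Efam ρ ∨ B ∈ Efam ρ := by
  classical
  set a : X → ℝ := Aᶜ.indicator 1 with ha_def
  set c : X → ℝ := Bᶜ.indicator 1 with hc_def
  have haM : a ∈ MPlus X := by
    constructor
    · exact (measurable_const (a := (1:ℝ))).indicator hA.compl
    · intro x
      by_cases h : x ∈ Aᶜ <;> simp [ha_def, indicator, h]
  have hcM : c ∈ MPlus X := by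
    constructor
    · exact (measurable_const (a := (1:ℝ))).indicator hB.compl
    · intro x
      by_cases h : x ∈ Bᶜ <;> simp [hc_def, indicator, h]
  have h0M : (0 : X → ℝ) ∈ MPlus X := ⟨measurable_const, fun x => le_refl 0⟩
  have hacM : a * c ∈ MPlus X :=
    ⟨haM.1.mul hcM.1, fun x => mul_nonneg (haM.2 x) (hcM.2 x)⟩
  -- agreement set of a*c with 0 is A ∪ B
  have hag : agree (a * c) 0 = A ∪ B := by
    ext x
    simp only [agree, mem_setOf_eq, Pi.mul_apply, Pi.zero_apply, mem_union]
    by_cases hxA : x ∈ A <;> by_cases hxB : x ∈ B <;>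
      simp [ha_def, hc_def, indicator, hxA, hxB]
  have hρ : ρ (a * c) 0 := hz.2 _ _ hacM h0M (by rw [hag]; exact hAB)
  -- twisted product: a*c + 0*0 vs a*0 + 0*c
  have htw : ρ (a * c + 0 * 0) (a * 0 + 0 * c) := by
    have : a * c + 0 * 0 = a * c := by ring
    rw [this]
    have : a * 0 + 0 * c = (0 : X → ℝ) := by ring
    rw [this]
    exact hρ
  have := hp.2 a 0 c 0 haM h0M hcM h0M htw
  rcases this with h | h
  · left
    refine ⟨a, 0, h, ?_⟩
    ext x
    simp only [agree, mem_setOf_eq, Pi.zero_apply]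
    by_cases hxA : x ∈ A <;> simp [ha_def, indicator, hxA]
  · right
    refine ⟨c, 0, h, ?_⟩
    ext x
    simp only [agree, mem_setOf_eq, Pi.zero_apply]
    by_cases hxB : x ∈ B <;> simp [hc_def, indicator, hxB]
end

section
/- For a z-congruence ρ on M⁺(X,𝒜), ρ is prime if and only if for all f, g ∈ M⁺(X,𝒜) there exists A ∈ E(ρ) such that f ≥ g on A or g ≥ f on A. -/
open Set

variable {X : Type*}

/-- `E(ρ)` is closed under binary intersections. -/
lemma efam_inter_aux [MeasurableSpace X] {ρ : (X → ℝ) → (X → ℝ) → Prop}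
    (hc : IsCongruence ρ) {u v u' v' : X → ℝ} (h : ρ u v) (h' : ρ u' v') :
    agree u v ∩ agree u' v' ∈ Efam ρ := by
  obtain ⟨hmem, hrefl, hsymm, htrans, hadd, hmul⟩ := hc
  have hu := (hmem u v h).1
  have hv := (hmem u v h).2
  have hu' := (hmem u' v' h').1
  have hv' := (hmem u' v' h').2
  have h1 : ρ (u * u + v * v) (u * v + v * u) :=
    hadd _ _ _ _ (hmul _ _ _ _ (hrefl u hu) h) (hmul _ _ _ _ (hrefl v hv) (hsymm _ _ h))
  have h2 : ρ (u' * u' + v' * v') (u' * v' + v' * u') :=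
    hadd _ _ _ _ (hmul _ _ _ _ (hrefl u' hu') h') (hmul _ _ _ _ (hrefl v' hv') (hsymm _ _ h'))
  refine ⟨_, _, hadd _ _ _ _ h1 h2, ?_⟩
  ext x
  simp only [agree, Set.mem_inter_iff, Set.mem_setOf_eq, Pi.add_apply, Pi.mul_apply]
  constructor
  · rintro ⟨e1, e2⟩
    rw [e1, e2]
  · intro hx
    have hsq : (u x - v x) ^ 2 + (u' x - v' x) ^ 2 = 0 := by nlinarith
    have hs1 : (u x - v x) ^ 2 = 0 := by nlinarith [sq_nonneg (u x - v x), sq_nonneg (u' x - v' x)]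
    have hs2 : (u' x - v' x) ^ 2 = 0 := by nlinarith [sq_nonneg (u x - v x), sq_nonneg (u' x - v' x)]
    constructor
    · have := pow_eq_zero_iff (n := 2) (by norm_num) |>.mp hs1
      linarith
    · have := pow_eq_zero_iff (n := 2) (by norm_num) |>.mp hs2
      linarith

/-- If some set of `E(ρ)` is contained in `agree a b`, then `ρ a b`. -/
lemma rho_of_efam_subset [MeasurableSpace X] {ρ : (X → ℝ) → (X → ℝ) → Prop}
    (hz : IsZCongruence ρ) {a b : X → ℝ} {D : Set X} (hD : D ∈ Efam ρ)
    (ha : a ∈ MPlus X) (hb : b ∈ MPlus X) (hsub : D ⊆ agree a b) : ρ a b := by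
  obtain ⟨u, v, huv, rfl⟩ := hD
  obtain ⟨hmem, hrefl, hsymm, htrans, hadd, hmul⟩ := hz.1
  have hpair : ρ (a * u + b * v) (a * v + b * u) :=
    hadd _ _ _ _ (hmul _ _ _ _ (hrefl a ha) huv) (hmul _ _ _ _ (hrefl b hb) (hsymm _ _ huv))
  apply hz.2 a b ha hb
  refine ⟨_, _, hpair, ?_⟩
  ext x
  simp only [agree, Set.mem_setOf_eq, Pi.add_apply, Pi.mul_apply]
  constructor
  · intro hx
    rw [hx]; ring
  · intro hx
    have hz0 : (a x - b x) * (u x - v x) = 0 := by linear_combination hx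
    rcases mul_eq_zero.mp hz0 with h0 | h0
    · linarith
    · have : u x = v x := by linarith
      exact hsub this

theorem stmt13 {X : Type*} [MeasurableSpace X] (ρ : (X → ℝ) → (X → ℝ) → Prop)
    (hz : IsZCongruence ρ) :
    IsPrimeCongruence ρ ↔
      ∀ f g : X → ℝ, f ∈ MPlus X → g ∈ MPlus X →
        ∃ A ∈ Efam ρ, (∀ x ∈ A, g x ≤ f x) ∨ (∀ x ∈ A, f x ≤ g x) := by
  have hcong := hz.1
  constructor
  · rintro ⟨hc, hp⟩ f g hf hg
    set h₁ : X → ℝ := fun x => max (f x - g x) 0 with hh₁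
    set h₂ : X → ℝ := fun x => max (g x - f x) 0 with hh₂
    have mh₁ : h₁ ∈ MPlus X :=
      ⟨(hf.1.sub hg.1).max measurable_const, fun x => le_max_right _ _⟩
    have mh₂ : h₂ ∈ MPlus X :=
      ⟨(hg.1.sub hf.1).max measurable_const, fun x => le_max_right _ _⟩
    have m0 : (0 : X → ℝ) ∈ MPlus X := ⟨measurable_const, fun x => le_rfl⟩
    have e1 : h₁ * h₂ + (0 : X → ℝ) * (0 : X → ℝ) = 0 := by
      funext x
      simp only [Pi.add_apply, Pi.mul_apply, Pi.zero_apply, mul_zero, add_zero, hh₁, hh₂]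
      rcases le_total (f x) (g x) with h | h
      · rw [max_eq_right (by linarith : f x - g x ≤ 0)]; ring
      · rw [max_eq_right (by linarith : g x - f x ≤ 0)]; ring
    have e2 : h₁ * (0 : X → ℝ) + (0 : X → ℝ) * h₂ = 0 := by
      funext x; simp
    have hρ0 : ρ (h₁ * h₂ + 0 * 0) (h₁ * 0 + 0 * h₂) := by
      rw [e1, e2]
      exact hcong.2.1 0 m0
    rcases hp h₁ 0 h₂ 0 mh₁ m0 mh₂ m0 hρ0 with h | h
    · refine ⟨agree h₁ 0, ⟨h₁, 0, h, rfl⟩, Or.inr ?_⟩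
      intro x hx
      have hx' : h₁ x = 0 := hx
      have := le_max_left (f x - g x) 0
      rw [hh₁] at hx'
      simp only at hx'
      nlinarith [le_max_left (f x - g x) (0 : ℝ)]
    · refine ⟨agree h₂ 0, ⟨h₂, 0, h, rfl⟩, Or.inl ?_⟩
      intro x hx
      have hx' : h₂ x = 0 := hx
      rw [hh₂] at hx'
      simp only at hx'
      nlinarith [le_max_left (g x - f x) (0 : ℝ)]
  · intro H
    refine ⟨hcong, ?_⟩
    intro a b c d ha hb hc hd hρ
    set f : X → ℝ := fun x => |a x - b x| with hf
    set g : X → ℝ := fun x => |c x - d x| with hg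
    have mf : f ∈ MPlus X := ⟨(ha.1.sub hb.1).abs, fun x => abs_nonneg _⟩
    have mg : g ∈ MPlus X := ⟨(hc.1.sub hd.1).abs, fun x => abs_nonneg _⟩
    obtain ⟨A, hA, hdisj⟩ := H f g mf mg
    obtain ⟨u, v, huv, rfl⟩ := hA
    have hDmem : agree u v ∩ agree (a * c + b * d) (a * d + b * c) ∈ Efam ρ :=
      efam_inter_aux hcong huv hρ
    have key : ∀ x ∈ agree (a * c + b * d) (a * d + b * c), a x = b x ∨ c x = d x := by
      intro x hx
      have hx' : a x * c x + b x * d x = a x * d x + b x * c x := hx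
      have hz0 : (a x - b x) * (c x - d x) = 0 := by linear_combination hx'
      rcases mul_eq_zero.mp hz0 with h0 | h0
      · exact Or.inl (by linarith)
      · exact Or.inr (by linarith)
    rcases hdisj with hle | hle
    · -- |c−d| ≤ |a−b| on A : conclude ρ c d
      refine Or.inr (rho_of_efam_subset hz hDmem hc hd ?_)
      rintro x ⟨hxA, hxS⟩
      rcases key x hxS with h0 | h0
      · have h1 := hle x hxA
        rw [hf, hg] at h1
        simp only at h1
        have : |c x - d x| = 0 := by
          have : |a x - b x| = 0 := by rw [h0]; simp
          have hnn : (0:ℝ) ≤ |c x - d x| := abs_nonneg _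
          linarith
        have := abs_eq_zero.mp this
        show c x = d x
        linarith
      · exact h0
    · -- |a−b| ≤ |c−d| on A : conclude ρ a b
      refine Or.inl (rho_of_efam_subset hz hDmem ha hb ?_)
      rintro x ⟨hxA, hxS⟩
      rcases key x hxS with h0 | h0
      · exact h0
      · have h1 := hle x hxA
        rw [hf, hg] at h1
        simp only at h1
        have : |a x - b x| = 0 := by
          have : |c x - d x| = 0 := by rw [h0]; simp
          have hnn : (0:ℝ) ≤ |a x - b x| := abs_nonneg _
          linarith
        have := abs_eq_zero.mp this
        show a x = b x
        linarith
end

section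
/- If 𝔉 is a prime Z_𝒜-filter on X, then E⁻¹(𝔉) is a prime congruence on M⁺(X,𝒜). -/
open Set

variable {X : Type*}

/-- Prime `Z_𝒜`-filter. -/
def IsPrimeZFilter [MeasurableSpace X] (F : Set (Set X)) : Prop :=
  IsZFilter F ∧
  ∀ A B : Set X, MeasurableSet A → MeasurableSet B → A ∪ B ∈ F → A ∈ F ∨ B ∈ F


theorem stmt14 {X : Type*} [MeasurableSpace X] (F : Set (Set X))
    (hF : IsPrimeZFilter F) :
    IsPrimeCongruence
      (fun f g : X → ℝ => f ∈ MPlus X ∧ g ∈ MPlus X ∧ agree f g ∈ F) := by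

  obtain ⟨⟨hne, hmem, hinter, hup⟩, hprime⟩ := hF
  have hmemF : ∀ {f g : X → ℝ}, f ∈ MPlus X → g ∈ MPlus X →
      agree f g ∈ F → ∀ {u v : X → ℝ}, u ∈ MPlus X → v ∈ MPlus X →
      agree f g ⊆ agree u v → agree u v ∈ F := by
    intro f g hf hg hfg u v hu hv hsub
    exact hup _ hfg _ (agree_meas hu.1 hv.1) hsub
  have huniv : ∀ {f : X → ℝ}, f ∈ MPlus X → agree f f ∈ F := by
    intro f hf
    obtain ⟨A, hA⟩ := hne
    exact hup A hA _ (agree_meas hf.1 hf.1) (fun x _ => rfl)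
  constructor
  · refine ⟨fun f g h => ⟨h.1, h.2.1⟩, fun f hf => ⟨hf, hf, huniv hf⟩,
      fun f g ⟨hf, hg, h⟩ => ⟨hg, hf, ?_⟩, fun f g h ⟨hf, hg, h1⟩ ⟨_, hh, h2⟩ =>
        ⟨hf, hh, ?_⟩, fun f g h k ⟨hf, hg, h1⟩ ⟨hh, hk, h2⟩ =>
        ⟨⟨hf.1.add hh.1, fun x => add_nonneg (hf.2 x) (hh.2 x)⟩,
         ⟨hg.1.add hk.1, fun x => add_nonneg (hg.2 x) (hk.2 x)⟩, ?_⟩,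
      fun f g h k ⟨hf, hg, h1⟩ ⟨hh, hk, h2⟩ =>
        ⟨⟨hf.1.mul hh.1, fun x => mul_nonneg (hf.2 x) (hh.2 x)⟩,
         ⟨hg.1.mul hk.1, fun x => mul_nonneg (hg.2 x) (hk.2 x)⟩, ?_⟩⟩
    · exact hup _ h _ (agree_meas hg.1 hf.1) (fun x hx => hx.symm)
    · exact hup _ (hinter _ h1 _ h2) _ (agree_meas hf.1 hh.1)
        (fun x ⟨hx1, hx2⟩ => hx1.trans hx2)
    · exact hup _ (hinter _ h1 _ h2) _
        (agree_meas (hf.1.add hh.1) (hg.1.add hk.1))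
        (fun x ⟨hx1, hx2⟩ => by simp only [agree, mem_setOf_eq] at *; simp [hx1, hx2])
    · exact hup _ (hinter _ h1 _ h2) _
        (agree_meas (hf.1.mul hh.1) (hg.1.mul hk.1))
        (fun x ⟨hx1, hx2⟩ => by simp only [agree, mem_setOf_eq] at *; simp [hx1, hx2])
  · intro a b c d ha hb hc hd ⟨_, _, hE⟩
    have hkey : agree (a * c + b * d) (a * d + b * c) = agree a b ∪ agree c d := by
      ext x
      simp only [agree, mem_setOf_eq, mem_union, Pi.add_apply, Pi.mul_apply]
      constructor
      · intro h
        rcases mul_eq_zero.mp (show (a x - b x) * (c x - d x) = 0 by nlinarith) with h' | h'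
        · exact Or.inl (sub_eq_zero.mp h')
        · exact Or.inr (sub_eq_zero.mp h')
      · rintro (h | h) <;> rw [h] <;> ring
    rw [hkey] at hE
    rcases hprime _ _ (agree_meas ha.1 hb.1) (agree_meas hc.1 hd.1) hE with h | h
    · exact Or.inl ⟨ha, hb, h⟩
    · exact Or.inr ⟨hc, hd, h⟩
end
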